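/- Let Ω ⊆ ℝⁿ be a bounded measurable set, u₁, …, u_k ∈ L²(Ω) orthonormal, and set h(ξ) = Σ_{j=1}^k |û_j(ξ)|². Then |∇h(ξ)| ≤ 2(2π)^(−n)·√(vol(Ω)·I(Ω)) for all ξ, where I(Ω) = min_{a ∈ ℝⁿ} ∫_Ω |x − a|² dx is the moment of inertia of Ω. -/

import Mathlib

/-! Measuring phases from a centre `a` leaves `|ûⱼ(ξ)|` unchanged. Bessel's inequality for the
orthonormal `uⱼ`, applied to the plane wave `x ↦ e^{i⟨x - a, ξ⟩}` and to the difference of two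
plane waves, shows that `ξ ↦ (ûⱼ(ξ))ⱼ ∈ ℓ²` is bounded by `(2π)^(-n/2) √vol(Ω)` and Lipschitz with
constant `(2π)^(-n/2) √(∫_Ω |x - a|²)`, since `|e^{is} - e^{it}| ≤ |s - t|`. As
`|‖z‖² - ‖w‖²| ≤ (‖z‖ + ‖w‖) ‖z - w‖`, the function `h = ‖(ûⱼ)ⱼ‖²` is Lipschitz with constant
`2 (2π)^(-n) √(vol(Ω) ∫_Ω |x - a|²)` for every `a`, which bounds `‖∇h‖`; finally take the
infimum over `a`. -/

open MeasureTheory Complex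
open scoped ComplexConjugate InnerProductSpace

theorem norm_exp_I_mul_ofReal_sub_le (s t : ℝ) :
    ‖exp (I * s) - exp (I * t)‖ ≤ |s - t| := by
  have hsplit : exp (I * s) - exp (I * t) = exp (I * t) * (exp (I * ↑(s - t)) - 1) := by
    rw [mul_sub, ← exp_add]
    push_cast
    ring_nf
  rw [hsplit, norm_mul, norm_exp_I_mul_ofReal, one_mul]
  exact Real.norm_exp_I_mul_ofReal_sub_one_le

theorem abs_norm_sq_sub_norm_sq_le {F : Type*} [SeminormedAddCommGroup F] (z w : F) :
    |‖z‖ ^ 2 - ‖w‖ ^ 2| ≤ (‖z‖ + ‖w‖) * ‖z - w‖ := by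
  rw [sq_sub_sq, abs_mul, abs_of_nonneg (by positivity)]
  exact mul_le_mul_of_nonneg_left (abs_norm_sub_norm_le z w) (by positivity)

theorem le_mul_sqrt_mul_ciInf {ι : Sort*} [Nonempty ι] {f : ι → ℝ} (hf : BddBelow (Set.range f))
    {x c V : ℝ} (hc : 0 ≤ c) (hV : 0 ≤ V) (h : ∀ i, x ≤ c * √(V * f i)) :
    x ≤ c * √(V * ⨅ i, f i) := by
  have hmono : Monotone fun t => c * √(V * t) := fun s t hst => by dsimp only; gcongr
  rw [hmono.map_ciInf_of_continuousAt (by fun_prop) hf]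
  exact le_ciInf h

section Bessel

variable {α ι : Type*} [MeasurableSpace α] {μ : Measure α} [Fintype ι] [DecidableEq ι]

theorem memLp_two_of_integral_conj_mul_self_ne_zero {f : α → ℂ} (hf : AEStronglyMeasurable f μ)
    (h : ∫ x, conj (f x) * f x ∂μ ≠ 0) : MemLp f 2 μ := by
  have hi : Integrable (fun x => conj (f x) * f x) μ := by
    by_contra hc
    exact h (integral_undef hc)
  refine (memLp_two_iff_integrable_sq_norm hf).2 (hi.re.congr (.of_forall fun x => ?_))
  dsimp only
  rw [RCLike.re_to_complex, ← normSq_eq_conj_mul_self, ofReal_re, normSq_eq_norm_sq]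

theorem MemLp.inner_toLp_toLp {f g : α → ℂ} (hf : MemLp f 2 μ) (hg : MemLp g 2 μ) :
    inner ℂ (hf.toLp f) (hg.toLp g) = ∫ x, conj (f x) * g x ∂μ := by
  rw [L2.inner_def]
  refine integral_congr_ae ?_
  filter_upwards [hf.coeFn_toLp, hg.coeFn_toLp] with x hfx hgx
  rw [hfx, hgx, RCLike.inner_apply, mul_comm]

theorem MemLp.norm_toLp_sq {g : α → ℂ} (hg : MemLp g 2 μ) :
    ‖hg.toLp g‖ ^ 2 = ∫ x, ‖g x‖ ^ 2 ∂μ := by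
  have hconj : ∀ x, conj (g x) * g x = ((‖g x‖ ^ 2 : ℝ) : ℂ) := fun x => by
    rw [← normSq_eq_conj_mul_self, normSq_eq_norm_sq]
  rw [← inner_self_eq_norm_sq (𝕜 := ℂ), MemLp.inner_toLp_toLp hg hg,
    integral_congr_ae (.of_forall hconj), integral_complex_ofReal, RCLike.re_to_complex, ofReal_re]

theorem sum_norm_integral_mul_sq_le (u : ι → α → ℂ) (hu : ∀ j, MemLp (u j) 2 μ)
    (horth : ∀ i j, ∫ x, conj (u i x) * u j x ∂μ = if i = j then 1 else 0)
    {g : α → ℂ} (hg : MemLp g 2 μ) :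
    ∑ j, ‖∫ x, u j x * g x ∂μ‖ ^ 2 ≤ ∫ x, ‖g x‖ ^ 2 ∂μ := by
  have hON : Orthonormal ℂ fun j => (hu j).toLp (u j) := by
    rw [orthonormal_iff_ite]
    intro i j
    rw [MemLp.inner_toLp_toLp, horth]
  have hbessel := hON.sum_inner_products_le (s := Finset.univ) hg.star.toLp
  rw [MemLp.norm_toLp_sq] at hbessel
  convert hbessel using 3 with j _ x
  · rw [MemLp.inner_toLp_toLp, ← RCLike.norm_conj, ← integral_conj]
    simp
  · simp

end Bessel

section FourierCoefficients

variable {E : Type*} [NormedAddCommGroup E] [InnerProductSpace ℝ E] [MeasurableSpace E]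
  {μ : Measure E}

theorem norm_integral_mul_exp_inner_sub (f : E → ℂ) (a ξ : E) :
    ‖∫ x, f x * exp (I * ⟪x - a, ξ⟫_ℝ) ∂μ‖ = ‖∫ x, f x * exp (I * ⟪x, ξ⟫_ℝ) ∂μ‖ := by
  have hphase : ∀ x, f x * exp (I * ⟪x - a, ξ⟫_ℝ)
      = exp (I * ↑(-⟪a, ξ⟫_ℝ)) * (f x * exp (I * ⟪x, ξ⟫_ℝ)) := fun x => by
    rw [inner_sub_left, ofReal_sub, ofReal_neg, mul_sub, sub_eq_neg_add, exp_add]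
    ring_nf
  rw [integral_congr_ae (.of_forall hphase), integral_const_mul, norm_mul,
    norm_exp_I_mul_ofReal, one_mul]

variable {ι : Type*} [Fintype ι]

/-- The Fourier transforms `ûⱼ(ξ)`, without the factor `(2π)^(-n/2)`, with phases measured from
the centre `a`. -/
noncomputable def centredFourierCoeffs (μ : Measure E) (u : ι → E → ℂ) (a ξ : E) :
    EuclideanSpace ℂ ι :=
  WithLp.toLp 2 fun j => ∫ x, u j x * exp (I * ⟪x - a, ξ⟫_ℝ) ∂μ

theorem norm_centredFourierCoeffs_sq (u : ι → E → ℂ) (a ξ : E) :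
    ‖centredFourierCoeffs μ u a ξ‖ ^ 2 = ∑ j, ‖∫ x, u j x * exp (I * ⟪x, ξ⟫_ℝ) ∂μ‖ ^ 2 := by
  simp only [EuclideanSpace.norm_sq_eq, centredFourierCoeffs, norm_integral_mul_exp_inner_sub]

variable [DecidableEq ι] [IsFiniteMeasure μ] [BorelSpace E] {u : ι → E → ℂ}

theorem norm_centredFourierCoeffs_sq_le (hu : ∀ j, MemLp (u j) 2 μ)
    (horth : ∀ i j, ∫ x, conj (u i x) * u j x ∂μ = if i = j then 1 else 0) (a ξ : E) :
    ‖centredFourierCoeffs μ u a ξ‖ ^ 2 ≤ μ.real Set.univ := by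
  have hwave : MemLp (fun x => exp (I * ⟪x - a, ξ⟫_ℝ)) 2 μ :=
    .of_bound (Continuous.aestronglyMeasurable (by fun_prop)) 1
      (.of_forall fun x => (norm_exp_I_mul_ofReal _).le)
  have h := sum_norm_integral_mul_sq_le u hu horth hwave
  simp only [norm_exp_I_mul_ofReal, one_pow, integral_const, smul_eq_mul, mul_one] at h
  simpa [EuclideanSpace.norm_sq_eq, centredFourierCoeffs] using h

theorem norm_centredFourierCoeffs_sub_sq_le (hu : ∀ j, MemLp (u j) 2 μ)
    (horth : ∀ i j, ∫ x, conj (u i x) * u j x ∂μ = if i = j then 1 else 0) {a : E}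
    (hI : Integrable (fun x => ‖x - a‖ ^ 2) μ) (ξ η : E) :
    ‖centredFourierCoeffs μ u a ξ - centredFourierCoeffs μ u a η‖ ^ 2
      ≤ ‖ξ - η‖ ^ 2 * ∫ x, ‖x - a‖ ^ 2 ∂μ := by
  set e : E → E → ℂ := fun ζ x => exp (I * ⟪x - a, ζ⟫_ℝ)
  have hint : ∀ j ζ, Integrable (fun x => u j x * e ζ x) μ := fun j ζ =>
    ((hu j).integrable one_le_two).mul_bdd (c := 1)
      (Continuous.aestronglyMeasurable (by fun_prop))
      (.of_forall fun x => (norm_exp_I_mul_ofReal _).le)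
  have hdiff : ∀ x, ‖e ξ x - e η x‖ ≤ ‖x - a‖ * ‖ξ - η‖ := fun x => calc
    ‖e ξ x - e η x‖ ≤ |⟪x - a, ξ⟫_ℝ - ⟪x - a, η⟫_ℝ| := norm_exp_I_mul_ofReal_sub_le _ _
    _ = |⟪x - a, ξ - η⟫_ℝ| := by rw [inner_sub_right]
    _ ≤ ‖x - a‖ * ‖ξ - η‖ := abs_real_inner_le_norm _ _
  have hwave : MemLp (fun x => e ξ x - e η x) 2 μ :=
    .of_bound (Continuous.aestronglyMeasurable (by fun_prop)) 2 (.of_forall fun x =>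
      (norm_sub_le _ _).trans (by simp [e, norm_exp_I_mul_ofReal]; norm_num))
  calc ‖centredFourierCoeffs μ u a ξ - centredFourierCoeffs μ u a η‖ ^ 2
      = ∑ j, ‖∫ x, u j x * (e ξ x - e η x) ∂μ‖ ^ 2 := by
        simp only [EuclideanSpace.norm_sq_eq, centredFourierCoeffs, mul_sub,
          integral_sub (hint _ ξ) (hint _ η)]
        rfl
    _ ≤ ∫ x, ‖e ξ x - e η x‖ ^ 2 ∂μ := sum_norm_integral_mul_sq_le u hu horth hwave
    _ ≤ ∫ x, ‖ξ - η‖ ^ 2 * ‖x - a‖ ^ 2 ∂μ :=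
        integral_mono_of_nonneg (.of_forall fun x => by positivity) (hI.const_mul _)
          (.of_forall fun x => (pow_le_pow_left₀ (norm_nonneg _) (hdiff x) 2).trans_eq (by ring))
    _ = ‖ξ - η‖ ^ 2 * ∫ x, ‖x - a‖ ^ 2 ∂μ := integral_const_mul _ _

theorem abs_sum_norm_integral_mul_exp_sq_sub_le (hu : ∀ j, MemLp (u j) 2 μ)
    (horth : ∀ i j, ∫ x, conj (u i x) * u j x ∂μ = if i = j then 1 else 0) {a : E}
    (hI : Integrable (fun x => ‖x - a‖ ^ 2) μ) (ξ η : E) :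
    |∑ j, ‖∫ x, u j x * exp (I * ⟪x, ξ⟫_ℝ) ∂μ‖ ^ 2 - ∑ j, ‖∫ x, u j x * exp (I * ⟪x, η⟫_ℝ) ∂μ‖ ^ 2|
      ≤ 2 * √(μ.real Set.univ * ∫ x, ‖x - a‖ ^ 2 ∂μ) * ‖ξ - η‖ := by
  set F := centredFourierCoeffs μ u a
  have hbound : ∀ ζ, ‖F ζ‖ ≤ √(μ.real Set.univ) := fun ζ =>
    Real.le_sqrt_of_sq_le (norm_centredFourierCoeffs_sq_le hu horth a ζ)
  have hlip : ‖F ξ - F η‖ ≤ ‖ξ - η‖ * √(∫ x, ‖x - a‖ ^ 2 ∂μ) :=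
    (Real.le_sqrt_of_sq_le (norm_centredFourierCoeffs_sub_sq_le hu horth hI ξ η)).trans_eq
      (by rw [Real.sqrt_mul (sq_nonneg _), Real.sqrt_sq (norm_nonneg _)])
  rw [← norm_centredFourierCoeffs_sq u a ξ, ← norm_centredFourierCoeffs_sq u a η]
  calc _ ≤ (‖F ξ‖ + ‖F η‖) * ‖F ξ - F η‖ := abs_norm_sq_sub_norm_sq_le _ _
    _ ≤ (2 * √(μ.real Set.univ)) * (‖ξ - η‖ * √(∫ x, ‖x - a‖ ^ 2 ∂μ)) := by
        gcongr
        linarith [hbound ξ, hbound η]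
    _ = _ := by rw [Real.sqrt_mul measureReal_nonneg]; ring

end FourierCoefficients

theorem stmt_16_general (n k : ℕ) (Ω : Set (EuclideanSpace ℝ (Fin n)))
    (hΩb : Bornology.IsBounded Ω)
    (u : Fin k → EuclideanSpace ℝ (Fin n) → ℂ)
    (hint : ∀ j, IntegrableOn (u j) Ω)
    (horth : ∀ i j, ∫ x in Ω, (starRingEnd ℂ) (u i x) * u j x = if i = j then 1 else 0)
    (h : EuclideanSpace ℝ (Fin n) → ℝ)
    (hh : h = fun ξ => ∑ j : Fin k,
        ‖(((2 * Real.pi) ^ (-(n : ℝ) / 2) : ℝ) : ℂ) *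
            ∫ x in Ω, u j x * Complex.exp (Complex.I * ((inner ℝ x ξ : ℝ) : ℂ))‖ ^ 2)
    (ξ : EuclideanSpace ℝ (Fin n)) :
    ‖fderiv ℝ h ξ‖
      ≤ 2 * (2 * Real.pi) ^ (-(n : ℝ)) *
          Real.sqrt ((volume Ω).toReal *
            ⨅ a : EuclideanSpace ℝ (Fin n), ∫ x in Ω, ‖x - a‖ ^ 2) := by
  have : IsFiniteMeasure (volume.restrict Ω) := isFiniteMeasure_restrict.2 hΩb.measure_lt_top.ne
  have hu : ∀ j, MemLp (u j) 2 (volume.restrict Ω) := fun j =>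
    memLp_two_of_integral_conj_mul_self_ne_zero (hint j).aestronglyMeasurable (by simp [horth])
  have hI : ∀ a, IntegrableOn (fun x => ‖x - a‖ ^ 2) Ω := fun a =>
    ((Continuous.continuousOn (by fun_prop)).integrableOn_compact
      hΩb.isCompact_closure).mono_set subset_closure
  have hc : ((2 * Real.pi) ^ (-(n : ℝ) / 2)) ^ 2 = (2 * Real.pi) ^ (-(n : ℝ)) := by
    rw [← Real.rpow_mul_natCast (by positivity)]
    ring_nf
  have hh' : h = fun ξ => (2 * Real.pi) ^ (-(n : ℝ)) *
      ∑ j, ‖∫ x in Ω, u j x * exp (I * ⟪x, ξ⟫_ℝ)‖ ^ 2 := by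
    simp only [hh, norm_mul, mul_pow, norm_real, Real.norm_eq_abs, sq_abs, hc, Finset.mul_sum]
  have hderiv : ∀ a, ‖fderiv ℝ h ξ‖
      ≤ 2 * (2 * Real.pi) ^ (-(n : ℝ)) * √((volume Ω).toReal * ∫ x in Ω, ‖x - a‖ ^ 2) := fun a =>
    norm_fderiv_le_of_lip' ℝ (by positivity) (.of_forall fun η => by
      rw [hh', ← mul_sub, norm_mul, Real.norm_eq_abs, abs_of_pos (by positivity)]
      have key := abs_sum_norm_integral_mul_exp_sq_sub_le hu horth (hI a) η ξ
      rw [measureReal_restrict_apply_univ, measureReal_def] at key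
      exact (mul_le_mul_of_nonneg_left key (by positivity)).trans_eq (by ring))
  exact le_mul_sqrt_mul_ciInf ⟨0, by rintro _ ⟨a, rfl⟩; positivity⟩ (by positivity)
    ENNReal.toReal_nonneg hderiv

theorem stmt_16 (n k : ℕ) (Ω : Set (EuclideanSpace ℝ (Fin n)))
    (hΩb : Bornology.IsBounded Ω) (hΩm : MeasurableSet Ω)
    (u : Fin k → EuclideanSpace ℝ (Fin n) → ℂ)
    (hint : ∀ j, IntegrableOn (u j) Ω)
    (horth : ∀ i j, ∫ x in Ω, (starRingEnd ℂ) (u i x) * u j x = if i = j then 1 else 0)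
    (h : EuclideanSpace ℝ (Fin n) → ℝ)
    (hh : h = fun ξ => ∑ j : Fin k,
        ‖(((2 * Real.pi) ^ (-(n : ℝ) / 2) : ℝ) : ℂ) *
            ∫ x in Ω, u j x * Complex.exp (Complex.I * ((inner ℝ x ξ : ℝ) : ℂ))‖ ^ 2)
    (ξ : EuclideanSpace ℝ (Fin n)) :
    ‖fderiv ℝ h ξ‖
      ≤ 2 * (2 * Real.pi) ^ (-(n : ℝ)) *
          Real.sqrt ((volume Ω).toReal *
            ⨅ a : EuclideanSpace ℝ (Fin n), ∫ x in Ω, ‖x - a‖ ^ 2) :=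
  stmt_16_general n k Ω hΩb u hint horth h hh ξ
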